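/- arXiv:2508.16840 — 8 statements merged into one kernel-verified Lean document; each statement's English description precedes it below -/
import Mathlib

section
/- Let f : ℕ → ℕ be non-decreasing and satisfy f(n) ≥ 1 for all n. Suppose there exists a constant C > 0 such that f(n) - f(n-1) ≤ C·f(n)/n for all n ≥ 1. Then for every K ≥ 1 there exists L > 0 such that f(K·n) ≤ L·f(n) for all n ≥ 1. -/
/-!
With `M ≥ 2C`, the hypothesis forces `f(m) / m ^ M` to be non-increasing for `m ≥ M`: it gives
`f(m+1) / f(m) ≤ (m+1) / (m+1-C)`, while Bernoulli's inequality gives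
`(m+1) ^ M / m ^ M ≥ (m+M) / m ≥ (m+1) / (m+1-C)`. Comparing `n` with `K n` then yields
`f(K n) ≤ K ^ M f(n)` for `n ≥ M`, and monotonicity handles the finitely many `n < M`.
-/

open Set

lemma pow_mul_add_le_mul_add_one_pow {x : ℝ} (hx : 0 < x) (M : ℕ) :
    x ^ M * (x + M) ≤ x * (x + 1) ^ M :=
  calc x ^ M * (x + M) = x * x ^ M * (1 + M * x⁻¹) := by field_simp
    _ ≤ x * x ^ M * (1 + x⁻¹) ^ M := by
      gcongr
      exact one_add_mul_le_pow (by linarith [inv_pos.2 hx]) M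
    _ = x * (x + 1) ^ M := by rw [mul_assoc, ← mul_pow, mul_add, mul_inv_cancel₀ hx.ne', mul_one]

lemma succ_mul_pow_le_mul_succ_pow {a : ℕ → ℝ} {C : ℝ} {M m : ℕ} (hM : 2 * C ≤ M)
    (hm : M ≤ m) (hm0 : 0 < m) (ha : 0 ≤ a m) (ha' : 0 ≤ a (m + 1))
    (hder : ((m + 1 : ℕ) : ℝ) * (a (m + 1) - a m) ≤ C * a (m + 1)) :
    a (m + 1) * m ^ M ≤ a m * (m + 1) ^ M := by
  have hmR : (0 : ℝ) < m := by exact_mod_cast hm0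
  have hMm : (M : ℝ) ≤ m := by exact_mod_cast hm
  push_cast at hder
  have hquad : (m : ℝ) * (m + 1) ≤ (m + M) * (m + 1 - C) := by nlinarith
  have hbern := pow_mul_add_le_mul_add_one_pow hmR M
  refine le_of_mul_le_mul_right ?_ (by positivity : (0 : ℝ) < m * (m + 1))
  calc a (m + 1) * m ^ M * (m * (m + 1))
      ≤ a (m + 1) * m ^ M * ((m + M) * (m + 1 - C)) := by gcongr
    _ = ((m + 1 - C) * a (m + 1)) * (m ^ M * (m + M)) := by ring
    _ ≤ ((m + 1) * a m) * (m * (m + 1) ^ M) :=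
      mul_le_mul (by linarith) hbern (by positivity) (by positivity)
    _ = a m * (m + 1) ^ M * (m * (m + 1)) := by ring

lemma antitoneOn_div_pow_of_discrete_deriv_le {a : ℕ → ℝ} {C : ℝ} {M : ℕ} (hM1 : 1 ≤ M)
    (hM : 2 * C ≤ M) (ha : ∀ n, 0 ≤ a n)
    (hder : ∀ n : ℕ, 1 ≤ n → (n : ℝ) * (a n - a (n - 1)) ≤ C * a n) :
    AntitoneOn (fun n : ℕ => a n / (n : ℝ) ^ M) (Ici M) := by
  refine antitoneOn_nat_Ici_of_succ_le fun m hm => ?_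
  have hm0 : 0 < m := by omega
  have hstep := succ_mul_pow_le_mul_succ_pow hM hm hm0 (ha m) (ha (m + 1))
    (by simpa using hder (m + 1) (by omega))
  rw [div_le_div_iff₀ (by positivity) (by positivity)]
  push_cast
  linarith

lemma le_pow_mul_of_discrete_deriv_le {a : ℕ → ℝ} {C : ℝ} {M : ℕ} (hM1 : 1 ≤ M)
    (hM : 2 * C ≤ M) (ha : ∀ n, 0 ≤ a n)
    (hder : ∀ n : ℕ, 1 ≤ n → (n : ℝ) * (a n - a (n - 1)) ≤ C * a n)
    {K n : ℕ} (hK : 1 ≤ K) (hn : M ≤ n) :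
    a (K * n) ≤ (K : ℝ) ^ M * a n := by
  have hnR : (0 : ℝ) < n := by exact_mod_cast (show 0 < n by omega)
  have hKR : (0 : ℝ) < K := by exact_mod_cast hK
  have h := antitoneOn_div_pow_of_discrete_deriv_le hM1 hM ha hder (mem_Ici.2 hn)
    (mem_Ici.2 (hn.trans (Nat.le_mul_of_pos_left n hK))) (Nat.le_mul_of_pos_left n hK)
  simp only [Nat.cast_mul, mul_pow] at h
  rw [div_le_div_iff₀ (by positivity) (by positivity)] at h
  nlinarith [pow_pos hnR M, pow_pos hKR M]

theorem stmt0_general (f : ℕ → ℕ) (hmono : Monotone f) (hpos : ∀ n, 1 ≤ f n)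
    (C : ℝ)
    (hder : ∀ n : ℕ, 1 ≤ n → (n : ℝ) * ((f n : ℝ) - (f (n - 1) : ℝ)) ≤ C * (f n : ℝ)) :
    ∀ K : ℕ, 1 ≤ K → ∃ L : ℝ, 0 < L ∧ ∀ n : ℕ, 1 ≤ n → (f (K * n) : ℝ) ≤ L * (f n : ℝ) := by
  intro K hK
  set M := ⌈2 * C⌉₊ + 1
  have hM : 2 * C ≤ M := by
    calc 2 * C ≤ ⌈2 * C⌉₊ := Nat.le_ceil _
      _ ≤ M := by exact_mod_cast Nat.le_succ _
  have hf1 : ∀ n, (1 : ℝ) ≤ f n := fun n => by exact_mod_cast hpos n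
  refine ⟨(K : ℝ) ^ M + f (K * M), by positivity, fun n _ => ?_⟩
  rcases le_or_gt M n with hn | hn
  · have := le_pow_mul_of_discrete_deriv_le (by omega) hM (fun n => (f n).cast_nonneg) hder hK hn
    nlinarith [hf1 n, hf1 (K * M)]
  · have : (f (K * n) : ℝ) ≤ f (K * M) := by exact_mod_cast hmono (Nat.mul_le_mul_left K hn.le)
    nlinarith [hf1 n, pow_pos (show (0 : ℝ) < K by exact_mod_cast hK) M]

/-- If `f : ℕ → ℕ` is non-decreasing, everywhere positive, and its discrete
derivative satisfies `f(n) - f(n-1) ≤ C·f(n)/n` for all `n ≥ 1`, then for every `K ≥ 1`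
there is `L > 0` with `f(K·n) ≤ L·f(n)` for all `n ≥ 1`. -/
theorem stmt0 (f : ℕ → ℕ) (hmono : Monotone f) (hpos : ∀ n, 1 ≤ f n)
    (C : ℝ) (hC : 0 < C)
    (hder : ∀ n : ℕ, 1 ≤ n → (n : ℝ) * ((f n : ℝ) - (f (n - 1) : ℝ)) ≤ C * (f n : ℝ)) :
    ∀ K : ℕ, 1 ≤ K → ∃ L : ℝ, 0 < L ∧ ∀ n : ℕ, 1 ≤ n → (f (K * n) : ℝ) ≤ L * (f n : ℝ) :=
  stmt0_general f hmono hpos C hder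
end

section
/- Fix a sequence of positive integers 1 < d₂ < d₃ < ⋯ with d_{i+1} > 4·d_i for all i ≥ 2. Define f : ℕ → ℕ by f(1) = 2; for n ≥ 2 with n ∉ {2d₂, 2d₃, …}, f(n) = f(n-1) + 1; and f(2d_i) = i·f(d_i). Then f is strictly increasing: f(n) < f(n+1) for all n ≥ 1. -/
/-!
On `[d i, 2 d i)` no jump occurs, so `f` grows by exactly one per step there and
`f (2 d i - 1) = f (d i) + d i - 1`. Since `f n ≥ n + 1` throughout, the jump value
`f (2 d i) = i f (d i) ≥ 2 f (d i)` exceeds this; away from the jumps `f` grows by one.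
-/

section Jumps

variable {d : ℕ → ℕ} (hd : ∀ i, 2 ≤ i → 2 * d i ≤ d (i + 1))
include hd

theorem two_mul_le_of_lt {j i : ℕ} (hj : 2 ≤ j) (hji : j < i) : 2 * d j ≤ d i := by
  induction i, hji using Nat.le_induction with
  | base => exact hd j hj
  | succ i hi ih => have := hd i (by omega); omega

theorem not_exists_eq_two_mul_of_lt_of_lt {i n : ℕ} (hi : 2 ≤ i) (hlo : d i < n)
    (hhi : n < 2 * d i) : ¬ ∃ j, 2 ≤ j ∧ n = 2 * d j := by
  rintro ⟨j, hj, rfl⟩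
  rcases lt_trichotomy j i with hji | rfl | hij
  · have := two_mul_le_of_lt hd hj hji; omega
  · omega
  · have := two_mul_le_of_lt hd hi hij; omega

end Jumps

section Recursion

variable {d f : ℕ → ℕ}
  (hfstep : ∀ n, 2 ≤ n → (¬ ∃ i, 2 ≤ i ∧ n = 2 * d i) → f n = f (n - 1) + 1)
include hfstep

theorem add_one_le_apply (hf1 : f 1 = 2) (hfjump : ∀ i, 2 ≤ i → f (2 * d i) = i * f (d i))
    {n : ℕ} (hn : 1 ≤ n) : n + 1 ≤ f n := by
  induction n using Nat.strong_induction_on with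
  | _ n ih =>
    by_cases hjump : ∃ i, 2 ≤ i ∧ n = 2 * d i
    · obtain ⟨i, hi, rfl⟩ := hjump
      have hfd := ih (d i) (by omega) (by omega)
      have : 2 * f (d i) ≤ i * f (d i) := Nat.mul_le_mul_right _ hi
      rw [hfjump i hi]
      omega
    · obtain rfl | hn2 := eq_or_lt_of_le hn
      · omega
      · have := ih (n - 1) (by omega) (by omega)
        rw [hfstep n hn2 hjump]
        omega

theorem apply_add_of_lt (hd : ∀ i, 2 ≤ i → 2 * d i ≤ d (i + 1)) {i : ℕ} (hi : 2 ≤ i) :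
    ∀ k < d i, f (d i + k) = f (d i) + k
  | 0, _ => rfl
  | k + 1, hk => by
    have hfree := not_exists_eq_two_mul_of_lt_of_lt hd hi (n := d i + (k + 1)) (by omega) (by omega)
    rw [hfstep _ (by omega) hfree, show d i + (k + 1) - 1 = d i + k by omega,
      apply_add_of_lt hd hi k (by omega)]
    rfl

end Recursion

theorem stmt2_general (d : ℕ → ℕ) (hdgrow : ∀ i, 2 ≤ i → 4 * d i < d (i + 1))
    (f : ℕ → ℕ) (hf1 : f 1 = 2)
    (hfstep : ∀ n, 2 ≤ n → (¬ ∃ i, 2 ≤ i ∧ n = 2 * d i) → f n = f (n - 1) + 1)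
    (hfjump : ∀ i, 2 ≤ i → f (2 * d i) = i * f (d i)) :
    ∀ n, 1 ≤ n → f n < f (n + 1) := by
  have hd : ∀ i, 2 ≤ i → 2 * d i ≤ d (i + 1) := fun i hi => by have := hdgrow i hi; omega
  intro n hn
  by_cases hjump : ∃ i, 2 ≤ i ∧ n + 1 = 2 * d i
  · obtain ⟨i, hi, hni⟩ := hjump
    have hbefore := apply_add_of_lt hfstep hd hi (d i - 1) (by omega)
    have hfd := add_one_le_apply hfstep hf1 hfjump (n := d i) (by omega)
    have : 2 * f (d i) ≤ i * f (d i) := Nat.mul_le_mul_right _ hi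
    rw [show n = d i + (d i - 1) by omega, hbefore, show d i + (d i - 1) + 1 = 2 * d i by omega,
      hfjump i hi]
    omega
  · rw [hfstep (n + 1) (by omega) hjump, Nat.add_sub_cancel]
    omega

/-- Given positive integers `1 < d₂ < d₃ < ⋯` with `d_{i+1} > 4 d_i`, the
function `f` with `f 1 = 2`, `f n = f (n-1) + 1` for `n ≥ 2` not of the form `2 d_i`,
and `f (2 d_i) = i · f (d_i)`, is strictly increasing. -/
theorem stmt2 (d : ℕ → ℕ) (hd2 : 1 < d 2) (hdgrow : ∀ i, 2 ≤ i → 4 * d i < d (i + 1))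
    (f : ℕ → ℕ) (hf1 : f 1 = 2)
    (hfstep : ∀ n, 2 ≤ n → (¬ ∃ i, 2 ≤ i ∧ n = 2 * d i) → f n = f (n - 1) + 1)
    (hfjump : ∀ i, 2 ≤ i → f (2 * d i) = i * f (d i)) :
    ∀ n, 1 ≤ n → f n < f (n + 1) :=
  stmt2_general d hdgrow f hf1 hfstep hfjump
end

section
/- Fix a sequence of positive integers 1 < d₂ < d₃ < ⋯ with d_{i+1} > 4·d_i for all i ≥ 2. Define f : ℕ → ℕ by f(1) = 2; for n ≥ 2 with n ∉ {2d₂, 2d₃, …}, f(n) = f(n-1) + 1; and f(2d_i) = i·f(d_i). Then f(2n) ≤ f(n)² for all n ≥ 1. -/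
/-!
Since `d (i+1) > 4 d i`, the window `(n, 2n]` contains at most one special point `2 d i`, and
`(d i, n]` contains none when `2 d i` lies in it. Off the special points `f` grows by one per step
and `n < f n`. If `(n, 2n]` has no special point, `f (2n) = f n + n ≤ f n ^ 2`. Otherwise
`d i ≤ n < 2 d i`, and with `F = f (d i)`, `t = n - d i` we get `f n = F + t` and
`f (2n) = i F + 2t ≤ (F + t) ^ 2`, because `i ≤ d i < F`.
-/

theorem eq_add_sub_of_forall_notMem_Ioc {J : ℕ → Prop} {f : ℕ → ℕ}
    (hstep : ∀ n, 2 ≤ n → ¬ J n → f n = f (n - 1) + 1) {a b : ℕ} (ha : 1 ≤ a) (hab : a ≤ b)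
    (hJ : ∀ m, a < m → m ≤ b → ¬ J m) : f b = f a + (b - a) := by
  induction b, hab using Nat.le_induction with
  | base => simp
  | succ b hab ih =>
    rw [hstep (b + 1) (by omega) (hJ (b + 1) (by omega) le_rfl), Nat.add_sub_cancel,
      ih fun m hm hmb => hJ m hm (by omega)]
    omega

theorem self_lt_of_step_of_jump {d f : ℕ → ℕ} (hf1 : f 1 = 2)
    (hfstep : ∀ n, 2 ≤ n → (¬ ∃ i, 2 ≤ i ∧ n = 2 * d i) → f n = f (n - 1) + 1)
    (hfjump : ∀ i, 2 ≤ i → f (2 * d i) = i * f (d i)) (n : ℕ) (hn : 1 ≤ n) : n < f n := by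
  induction n using Nat.strong_induction_on with
  | _ n ih =>
    obtain rfl | hn2 : n = 1 ∨ 2 ≤ n := by omega
    · omega
    by_cases hspecial : ∃ i, 2 ≤ i ∧ n = 2 * d i
    · obtain ⟨i, hi, rfl⟩ := hspecial
      have := ih (d i) (by omega) (by omega)
      rw [hfjump i hi]
      nlinarith
    · have := ih (n - 1) (by omega) (by omega)
      rw [hfstep n hn2 hspecial]
      omega

section Growth

variable {d : ℕ → ℕ} (hdgrow : ∀ i, 2 ≤ i → 4 * d i < d (i + 1))
include hdgrow

theorem four_mul_lt_of_lt {j i : ℕ} (hj : 2 ≤ j) (hji : j < i) : 4 * d j < d i := by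
  induction i, hji using Nat.le_induction with
  | base => exact hdgrow j hj
  | succ i hji ih =>
    have := hdgrow i (by omega)
    omega

theorem self_le_of_two_le (hd2 : 1 < d 2) {i : ℕ} (hi : 2 ≤ i) : i ≤ d i := by
  induction i, hi using Nat.le_induction with
  | base => omega
  | succ i hi ih =>
    have := hdgrow i hi
    omega

theorem eq_of_lt_two_mul {i j : ℕ} (hi : 2 ≤ i) (hj : 2 ≤ j) (hij : d i < 2 * d j)
    (hji : d j < 2 * d i) : j = i := by
  rcases lt_trichotomy j i with h | rfl | h
  · have := four_mul_lt_of_lt hdgrow hj h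
    omega
  · rfl
  · have := four_mul_lt_of_lt hdgrow hi h
    omega

end Growth

/-- Given positive integers `1 < d₂ < d₃ < ⋯` with `d_{i+1} > 4 d_i`, the
function `f` with `f 1 = 2`, `f n = f (n-1) + 1` for `n ≥ 2` not of the form `2 d_i`,
and `f (2 d_i) = i · f (d_i)`, is strictly increasing. -/
theorem stmt3 (d : ℕ → ℕ) (hd2 : 1 < d 2) (hdgrow : ∀ i, 2 ≤ i → 4 * d i < d (i + 1))
    (f : ℕ → ℕ) (hf1 : f 1 = 2)
    (hfstep : ∀ n, 2 ≤ n → (¬ ∃ i, 2 ≤ i ∧ n = 2 * d i) → f n = f (n - 1) + 1)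
    (hfjump : ∀ i, 2 ≤ i → f (2 * d i) = i * f (d i)) :
    ∀ n, 1 ≤ n → f (2 * n) ≤ f n ^ 2 := by
  intro n hn
  have hlt := self_lt_of_step_of_jump hf1 hfstep hfjump
  by_cases hwindow : ∃ i, 2 ≤ i ∧ d i ≤ n ∧ n < 2 * d i
  · obtain ⟨i, hi, hdn, hn2⟩ := hwindow
    have honly : ∀ m, d i < m → m ≤ 2 * n → (∃ j, 2 ≤ j ∧ m = 2 * d j) → m = 2 * d i := by
      rintro m hm hm2 ⟨j, hj, rfl⟩
      rw [eq_of_lt_two_mul hdgrow hi hj hm (by omega)]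
    have hfn : f n = f (d i) + (n - d i) :=
      eq_add_sub_of_forall_notMem_Ioc hfstep (by omega) hdn
        fun m hm hmn hJ => by have := honly m hm (by omega) hJ; omega
    have hf2n : f (2 * n) = i * f (d i) + (2 * n - 2 * d i) := by
      rw [← hfjump i hi]
      exact eq_add_sub_of_forall_notMem_Ioc hfstep (by omega) (by omega)
        fun m hm hmn hJ => by have := honly m (by omega) hmn hJ; omega
    have hiF : i < f (d i) := (self_le_of_two_le hdgrow hd2 hi).trans_lt (hlt (d i) (by omega))
    obtain ⟨t, rfl⟩ : ∃ t, n = d i + t := ⟨n - d i, by omega⟩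
    rw [hfn, hf2n, show 2 * (d i + t) - 2 * d i = 2 * t by omega, Nat.add_sub_cancel_left]
    nlinarith
  · have hf2n : f (2 * n) = f n + n := by
      rw [eq_add_sub_of_forall_notMem_Ioc hfstep hn (by omega)
        fun m hm hm2 ⟨j, hj, hmj⟩ => hwindow ⟨j, hj, by omega, by omega⟩]
      omega
    nlinarith [hlt n hn]
end

section
/- Let v be a nonempty word that belongs to sets constructed as follows: W(0) = Σ for a finite alphabet Σ, and W(k+1) = W(k)·C(k) where C(k) ⊆ W(k) and every word in W(k) has length 2^k. If v is a prefix of some word in W(t), then v can be written as a concatenation v = v₁v₂⋯v_s with v_i ∈ W(m_i) for some strictly decreasing sequence m₁ > m₂ > ⋯ > m_s ≥ 0. -/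
/-! A proper prefix `v` of `x = a · b ∈ W (k+1)` is either a proper prefix of `a`, or `a` itself,
or `a` followed by a proper prefix of `b`. By induction, a proper prefix of a word in `W t`
factors into blocks from `W m₁, W m₂, …` with `t > m₁ > m₂ > ⋯`; the bound `m < t` is what
lets the block `a ∈ W k` be placed in front of the factorization of the prefix of `b`. -/

namespace List

variable {A : Type*}

theorem exists_decreasing_factorization_of_prefix_of_ne (W : ℕ → Set (List A))
    (hW0 : ∀ x ∈ W 0, x.length = 1)
    (hWsucc : ∀ k, ∀ x ∈ W (k + 1), ∃ a ∈ W k, ∃ b ∈ W k, x = a ++ b)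
    {t : ℕ} {x v : List A} (hx : x ∈ W t) (hpre : v <+: x) (hne : v ≠ x) :
    ∃ (ms : List ℕ) (parts : List (List A)),
      ms.IsChain (· > ·) ∧ (∀ m ∈ ms, m < t) ∧
      Forall₂ (fun m p => p ∈ W m) ms parts ∧ parts.flatten = v := by
  induction t generalizing x v with
  | zero =>
    have hle := hpre.length_le
    have hne1 : v.length ≠ 1 := fun h => hne (hpre.eq_of_length (h.trans (hW0 x hx).symm))
    have hv : v = [] := eq_nil_of_length_eq_zero (by rw [hW0 x hx] at hle; omega)
    exact ⟨[], [], isChain_nil, by simp, .nil, by simp [hv]⟩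
  | succ k ih =>
    obtain ⟨a, ha, b, hb, rfl⟩ := hWsucc k x hx
    rcases prefix_or_prefix_of_prefix hpre (prefix_append a b) with hva | hav
    · by_cases hv : v = a
      · exact ⟨[k], [a], isChain_singleton _, by simp, .cons ha .nil, by simp [hv]⟩
      obtain ⟨ms, parts, hchain, hlt, hparts, hflat⟩ := ih ha hva hv
      exact ⟨ms, parts, hchain, fun m hm => (hlt m hm).trans k.lt_succ_self, hparts, hflat⟩
    · obtain ⟨w, rfl⟩ := hav
      have hwb : w <+: b := prefix_append_right_inj a |>.mp hpre
      have hw : w ≠ b := fun h => hne (h ▸ rfl)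
      obtain ⟨ms, parts, hchain, hlt, hparts, hflat⟩ := ih hb hwb hw
      refine ⟨k :: ms, a :: parts, hchain.cons fun m hm => hlt m (mem_of_mem_head? hm), ?_,
        .cons ha hparts, by simp [hflat]⟩
      simpa using fun m hm => (hlt m hm).trans k.lt_succ_self

end List

theorem stmt9_general {A : Type*} (W C : ℕ → Set (List A))
    (hW0 : W 0 = {l : List A | ∃ c : A, l = [c]})
    (hC : ∀ k, C k ⊆ W k)
    (hWsucc : ∀ k, W (k + 1) = {v : List A | ∃ x ∈ W k, ∃ y ∈ C k, v = x ++ y})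
    (v : List A) (t : ℕ) (x : List A) (hx : x ∈ W t) (hpre : v <+: x) :
    ∃ (ms : List ℕ) (parts : List (List A)),
      List.Chain' (· > ·) ms ∧
      List.Forall₂ (fun (m : ℕ) (p : List A) => p ∈ W m) ms parts ∧
      parts.flatten = v := by
  by_cases hv : v = x
  · exact ⟨[t], [x], List.isChain_singleton _, .cons hx .nil, by simp [hv]⟩
  have hW0_length : ∀ x ∈ W 0, x.length = 1 := by
    rw [hW0]
    rintro _ ⟨c, rfl⟩
    rfl
  have hW_split : ∀ k, ∀ x ∈ W (k + 1), ∃ a ∈ W k, ∃ b ∈ W k, x = a ++ b := by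
    intro k x hx
    rw [hWsucc] at hx
    obtain ⟨a, ha, b, hb, rfl⟩ := hx
    exact ⟨a, ha, b, hC k hb, rfl⟩
  obtain ⟨ms, parts, hchain, -, hparts, hflat⟩ :=
    List.exists_decreasing_factorization_of_prefix_of_ne W hW0_length hW_split hx hpre hv
  exact ⟨ms, parts, hchain, hparts, hflat⟩

/-- Let `W 0 = Σ` (all one-letter words) and `W (k+1) = W k · C k` with
`C k ⊆ W k` (so every word in `W k` has length `2^k`). Every nonempty prefix `v` of a
word in some `W t` decomposes as `v = v₁⋯v_s` with `v_i ∈ W (m_i)` for a strictly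
decreasing sequence `m₁ > ⋯ > m_s ≥ 0`. -/
theorem stmt9 {A : Type*} [Fintype A] (W C : ℕ → Set (List A))
    (hW0 : W 0 = {l : List A | ∃ c : A, l = [c]})
    (hC : ∀ k, C k ⊆ W k)
    (hWsucc : ∀ k, W (k + 1) = {v : List A | ∃ x ∈ W k, ∃ y ∈ C k, v = x ++ y})
    (hlen : ∀ k, ∀ u ∈ W k, u.length = 2 ^ k)
    (v : List A) (hv : v ≠ []) (t : ℕ) (x : List A) (hx : x ∈ W t) (hpre : v <+: x) :
    ∃ (ms : List ℕ) (parts : List (List A)),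
      List.Chain' (· > ·) ms ∧
      List.Forall₂ (fun (m : ℕ) (p : List A) => p ∈ W m) ms parts ∧
      parts.flatten = v :=
  stmt9_general W C hW0 hC hWsucc v t x hx hpre
end

section
/- Let Σ be a finite alphabet and let sets W(k) ⊆ Σ^{2^k} satisfy W(0) = Σ and W(k+1) = W(k)·C(k) with C(k) ⊆ W(k). If v is a nonempty suffix of some word in W(t), then v = v₁v₂⋯v_r with v_i ∈ W(n_i) for some strictly increasing sequence 0 ≤ n₁ < n₂ < ⋯ < n_r. -/
/-!
Induct on `t`, proving the stronger claim that a *proper* suffix of a word of `W t` factors with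
all indices `< t`. A proper suffix of `x = a b ∈ W (t+1)` (with `a, b ∈ W t`) is either a suffix
of `b` — `b` itself, or a proper suffix handled by induction — or `v' b` with `v'` a proper
suffix of `a`; then the factorization of `v'` uses indices `< t`, so `b` can be appended as the
block of index `t`. Properness is what keeps the indices strictly increasing: for `v' = a` the
index `t` would occur twice, but then `v = x` is a single block.
-/

namespace List

theorem IsSuffix.of_append {α : Type*} {v a b : List α} (h : v <:+ a ++ b) :
    v <:+ b ∨ ∃ v', v' <:+ a ∧ v = v' ++ b := by
  obtain ⟨u, hu⟩ := h
  rcases append_eq_append_iff.mp hu with ⟨v', rfl, rfl⟩ | ⟨w, -, rfl⟩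
  · exact .inr ⟨v', suffix_append u v', rfl⟩
  · exact .inl (suffix_append w v)

end List

section Factorization

variable {A : Type*} (W : ℕ → Set (List A))

def FactorsBelow (n : ℕ) (v : List A) : Prop :=
  ∃ (ms : List ℕ) (parts : List (List A)), List.IsChain (· < ·) ms ∧
    List.Forall₂ (fun m p => p ∈ W m) ms parts ∧ parts.flatten = v ∧ ∀ m ∈ ms, m < n

variable {W}

theorem factorsBelow_nil (n : ℕ) : FactorsBelow W n [] :=
  ⟨[], [], List.isChain_nil, List.Forall₂.nil, rfl, by simp⟩

theorem FactorsBelow.mono {n n' : ℕ} {v : List A} (h : FactorsBelow W n v) (hn : n ≤ n') :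
    FactorsBelow W n' v := by
  obtain ⟨ms, parts, hchain, hparts, rfl, hlt⟩ := h
  exact ⟨ms, parts, hchain, hparts, rfl, fun m hm => (hlt m hm).trans_le hn⟩

theorem FactorsBelow.append_of_mem {k : ℕ} {u b : List A} (hu : FactorsBelow W k u)
    (hb : b ∈ W k) : FactorsBelow W (k + 1) (u ++ b) := by
  obtain ⟨ms, parts, hchain, hparts, rfl, hlt⟩ := hu
  refine ⟨ms ++ [k], parts ++ [b], ?_, List.rel_append hparts (by simpa using hb), by simp, ?_⟩
  · rw [List.isChain_append]
    refine ⟨hchain, List.isChain_singleton k, fun m hm k' hk' => ?_⟩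
    rw [List.head?_singleton, Option.mem_some_iff] at hk'
    subst hk'
    exact hlt m (List.mem_of_mem_getLast? hm)
  · intro m hm
    rcases List.mem_append.mp hm with hm | hm
    · exact (hlt m hm).trans k.lt_succ_self
    · exact List.mem_singleton.mp hm ▸ k.lt_succ_self

theorem factorsBelow_of_mem {k : ℕ} {b : List A} (hb : b ∈ W k) : FactorsBelow W (k + 1) b :=
  (factorsBelow_nil k).append_of_mem hb

theorem factorsBelow_of_isSuffix_of_ne
    (h0 : ∀ x ∈ W 0, x.length ≤ 1)
    (hstep : ∀ k, ∀ x ∈ W (k + 1), ∃ a ∈ W k, ∃ b ∈ W k, x = a ++ b)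
    {t : ℕ} {x v : List A} (hx : x ∈ W t) (hvx : v <:+ x) (hne : v ≠ x) :
    FactorsBelow W t v := by
  induction t generalizing x v with
  | zero =>
    obtain rfl : v = [] := by
      by_contra hv
      have := List.length_pos_iff.mpr hv
      exact hne (hvx.eq_of_length (by have := hvx.length_le; have := h0 x hx; omega))
    exact factorsBelow_nil 0
  | succ t ih =>
    obtain ⟨a, ha, b, hb, rfl⟩ := hstep t x hx
    rcases hvx.of_append with hvb | ⟨v', hv'a, rfl⟩
    · by_cases hvb' : v = b
      · exact hvb' ▸ factorsBelow_of_mem hb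
      · exact (ih hb hvb hvb').mono (Nat.le_succ t)
    · have hv'a' : v' ≠ a := by rintro rfl; exact hne rfl
      exact (ih ha hv'a hv'a').append_of_mem hb

end Factorization

theorem stmt10_general {A : Type*} (W C : ℕ → Set (List A))
    (hW0 : W 0 = {l : List A | ∃ c : A, l = [c]})
    (hC : ∀ k, C k ⊆ W k)
    (hWsucc : ∀ k, W (k + 1) = {v : List A | ∃ x ∈ W k, ∃ y ∈ C k, v = x ++ y})
    (v : List A) (t : ℕ) (x : List A) (hx : x ∈ W t) (hpre : v <:+ x) :
    ∃ (ms : List ℕ) (parts : List (List A)),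
      List.Chain' (· < ·) ms ∧
      List.Forall₂ (fun (m : ℕ) (p : List A) => p ∈ W m) ms parts ∧
      parts.flatten = v := by
  have h0 : ∀ x ∈ W 0, x.length ≤ 1 := by
    rintro x hx
    rw [hW0] at hx
    obtain ⟨c, rfl⟩ := hx
    simp
  have hstep : ∀ k, ∀ x ∈ W (k + 1), ∃ a ∈ W k, ∃ b ∈ W k, x = a ++ b := by
    intro k x hx
    rw [hWsucc] at hx
    obtain ⟨a, ha, b, hb, rfl⟩ := hx
    exact ⟨a, ha, b, hC k hb, rfl⟩
  have hfactors : FactorsBelow W (t + 1) v := by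
    by_cases hvx : v = x
    · exact hvx ▸ factorsBelow_of_mem hx
    · exact (factorsBelow_of_isSuffix_of_ne h0 hstep hx hpre hvx).mono (Nat.le_succ t)
  obtain ⟨ms, parts, hchain, hparts, hflat, -⟩ := hfactors
  exact ⟨ms, parts, hchain, hparts, hflat⟩

/-- Let `W 0 = Σ` (all one-letter words) and `W (k+1) = W k · C k` with
`C k ⊆ W k` (so every word in `W k` has length `2^k`). Every nonempty suffix `v` of a
word in some `W t` decomposes as `v = v₁⋯v_s` with `v_i ∈ W (m_i)` for a strictly
increasing sequence `0 ≤ n₁ < ⋯ < n_r`. -/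
theorem stmt10 {A : Type*} [Fintype A] (W C : ℕ → Set (List A))
    (hW0 : W 0 = {l : List A | ∃ c : A, l = [c]})
    (hC : ∀ k, C k ⊆ W k)
    (hWsucc : ∀ k, W (k + 1) = {v : List A | ∃ x ∈ W k, ∃ y ∈ C k, v = x ++ y})
    (hlen : ∀ k, ∀ u ∈ W k, u.length = 2 ^ k)
    (v : List A) (hv : v ≠ []) (t : ℕ) (x : List A) (hx : x ∈ W t) (hpre : v <:+ x) :
    ∃ (ms : List ℕ) (parts : List (List A)),
      List.Chain' (· < ·) ms ∧
      List.Forall₂ (fun (m : ℕ) (p : List A) => p ∈ W m) ms parts ∧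
      parts.flatten = v :=
  stmt10_general W C hW0 hC hWsucc v t x hx hpre
end

section
/- Let f : ℕ → ℕ be non-decreasing, submultiplicative (f(m+n) ≤ f(m)·f(n)), and subexponential (f(n)^{1/n} → 1). Set b = f(1). Then there exists a sequence of positive integers (c_k)_{k≥0} with c₀ = 1, c_{k+1} ≤ N_k for all k (where N_k = b·c₀·c₁⋯c_k), such that f(2^k) ≤ N_k ≤ 2·f(2^{k+1}) for all k ≥ 0, and c_k = 1 for infinitely many k. -/
open Filter

/-!
With `g k = f (2 ^ k)`, submultiplicativity gives `g (k + 1) ≤ g k ^ 2`, so squaring `N_k` keeps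
`g (k + 1) ≤ N_{k+1}`; when squaring would overshoot `2 g (k + 2)`, the largest admissible factor
lands `N_{k+1}` in `(g (k + 2), 2 g (k + 2)]`, which is high enough that the next factor can be `1`.
If from some point on every factor exceeded `1`, the construction would square forever, so
`N_k ≥ 2 ^ 2 ^ (k - K)`; this doubly exponential growth of `g` contradicts `f (n) ^ (1 / n) → 1`.
-/

open Finset

theorem Nat.lt_two_mul_mul_div {a b : ℕ} (hb : 0 < b) (hba : b ≤ a) : a < 2 * (b * (a / b)) := by
  have hlt : a < b * (a / b) + b := by simpa [mul_add] using Nat.lt_mul_div_succ a hb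
  have hle : b ≤ b * (a / b) := Nat.le_mul_of_pos_right b (Nat.div_pos hba hb)
  omega

theorem eventually_pow_lt_two_pow {x : ℕ → ℕ}
    (hx : Tendsto (fun n : ℕ => (x n : ℝ) ^ ((1 : ℝ) / (n : ℝ))) atTop (nhds 1))
    {m : ℕ} (hm : m ≠ 0) : ∀ᶠ n in atTop, x n ^ m < 2 ^ n := by
  have hr : (1 : ℝ) < 2 ^ ((m : ℝ)⁻¹) := Real.one_lt_rpow one_lt_two (by positivity)
  filter_upwards [hx.eventually (gt_mem_nhds hr), eventually_ne_atTop 0] with n hn hn0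
  rw [one_div] at hn
  have key := pow_lt_pow_left₀ hn (by positivity) (mul_ne_zero hn0 hm)
  rw [pow_mul, Real.rpow_inv_natCast_pow (by positivity) hn0, mul_comm, pow_mul,
    Real.rpow_inv_natCast_pow zero_le_two hm] at key
  exact_mod_cast key

namespace SquaringConstruction

/-- `c` and `N` are the paper's `c_k` and `N_k`, with `g k` standing for `f (2 ^ k)`; `forceOne`
records a truncated step, after which the next factor is `1` (the paper's `c_{k+2} = 1`). -/
structure State where
  c : ℕ
  N : ℕ
  forceOne : Bool

def step (g : ℕ → ℕ) (k : ℕ) (s : State) : State :=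
  if s.forceOne then ⟨1, s.N, false⟩
  else if s.N ^ 2 ≤ 2 * g (k + 2) then ⟨s.N, s.N ^ 2, false⟩
  else ⟨2 * g (k + 2) / s.N, s.N * (2 * g (k + 2) / s.N), true⟩

def state (g : ℕ → ℕ) : ℕ → State
  | 0 => ⟨1, g 0, false⟩
  | k + 1 => step g k (state g k)

variable {g : ℕ → ℕ}

theorem N_state_succ (k : ℕ) : (state g (k + 1)).N = (state g k).N * (state g (k + 1)).c := by
  simp only [state, step]
  split_ifs <;> simp [sq]

theorem N_state_eq_mul_prod (k : ℕ) :
    (state g k).N = g 0 * ∏ j ∈ range (k + 1), (state g j).c := by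
  induction k with
  | zero => simp [state]
  | succ k ih => rw [prod_range_succ, ← mul_assoc, ← ih, N_state_succ]

theorem c_state_succ_of_forceOne {k : ℕ} (h : (state g k).forceOne) :
    (state g (k + 1)).c = 1 := by
  simp [state, step, h]

theorem state_succ_of_not_forceOne {k : ℕ} (hk : (state g k).forceOne = false)
    (hk' : (state g (k + 1)).forceOne = false) :
    (state g (k + 1)).c = (state g k).N ∧ (state g (k + 1)).N = (state g k).N ^ 2 := by
  simp only [state, step, hk] at hk' ⊢
  split_ifs at hk' ⊢ <;> simp_all

theorem state_bounds (hmono : Monotone g) (hpos : 1 ≤ g 0) (hsq : ∀ k, g (k + 1) ≤ g k ^ 2) :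
    ∀ k, (g k ≤ (state g k).N ∧ (state g k).N ≤ 2 * g (k + 1)) ∧
      ((state g k).forceOne → g (k + 1) ≤ (state g k).N)
  | 0 => by
    have := hmono zero_le_one
    exact ⟨⟨le_rfl, by simp only [state, zero_add]; omega⟩, by simp [state]⟩
  | k + 1 => by
    obtain ⟨⟨hlo, hhi⟩, hforce⟩ := state_bounds hmono hpos hsq k
    have hmono1 : g (k + 1) ≤ g (k + 2) := hmono (Nat.le_succ _)
    rw [show k + 1 + 1 = k + 2 from rfl]
    simp only [state, step]
    split_ifs with hf hle <;> dsimp only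
    · exact ⟨⟨hforce hf, by omega⟩, by simp⟩
    · exact ⟨⟨(hsq k).trans (Nat.pow_le_pow_left hlo 2), hle⟩, by simp⟩
    · have hN : 0 < (state g k).N := hpos.trans ((hmono k.zero_le).trans hlo)
      have hgt := Nat.lt_two_mul_mul_div hN (show (state g k).N ≤ 2 * g (k + 2) by omega)
      have hle' := Nat.mul_div_le (2 * g (k + 2)) (state g k).N
      exact ⟨⟨by omega, hle'⟩, fun _ => by omega⟩

theorem one_le_N_state (hmono : Monotone g) (hpos : 1 ≤ g 0) (hsq : ∀ k, g (k + 1) ≤ g k ^ 2)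
    (k : ℕ) : 1 ≤ (state g k).N :=
  hpos.trans ((hmono k.zero_le).trans (state_bounds hmono hpos hsq k).1.1)

theorem one_le_c_state (hmono : Monotone g) (hpos : 1 ≤ g 0) (hsq : ∀ k, g (k + 1) ≤ g k ^ 2) :
    ∀ k, 1 ≤ (state g k).c
  | 0 => le_rfl
  | k + 1 => by
    have hN := one_le_N_state hmono hpos hsq k
    have hhi := (state_bounds hmono hpos hsq k).1.2
    have hmono1 : g (k + 1) ≤ g (k + 2) := hmono (Nat.le_succ _)
    simp only [state, step]
    split_ifs
    · exact le_rfl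
    · exact hN
    · exact Nat.div_pos (by omega) hN

theorem c_state_succ_le (hmono : Monotone g) (hpos : 1 ≤ g 0) (hsq : ∀ k, g (k + 1) ≤ g k ^ 2)
    (k : ℕ) : (state g (k + 1)).c ≤ (state g k).N := by
  have hN := one_le_N_state hmono hpos hsq k
  simp only [state, step]
  split_ifs
  · exact hN
  · exact le_rfl
  · exact Nat.div_le_of_le_mul (by rw [← sq]; omega)

theorem infinite_setOf_c_state_eq_one (hmono : Monotone g) (hpos : 1 ≤ g 0)
    (hsq : ∀ k, g (k + 1) ≤ g k ^ 2) (hgrowth : ∀ m ≠ 0, ∀ᶠ k in atTop, g k ^ m < 2 ^ 2 ^ k) :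
    {k | (state g k).c = 1}.Infinite := by
  rw [← Nat.frequently_atTop_iff_infinite]
  intro hev
  obtain ⟨K, hK⟩ := eventually_atTop.1 hev
  have hforce : ∀ k ≥ K, (state g k).forceOne = false := fun k hk => by
    by_contra h
    exact hK (k + 1) (by omega) (c_state_succ_of_forceOne (by simpa using h))
  have hsquare : ∀ k ≥ K, (state g (k + 1)).c = (state g k).N ∧
      (state g (k + 1)).N = (state g k).N ^ 2 := fun k hk =>
    state_succ_of_not_forceOne (hforce k hk) (hforce (k + 1) (by omega))
  have htwo : ∀ k ≥ K, 2 ≤ (state g k).N := fun k hk => by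
    have := one_le_c_state hmono hpos hsq (k + 1)
    have := hK (k + 1) (by omega)
    have := (hsquare k hk).1
    omega
  have hdouble : ∀ j, 2 ^ 2 ^ j ≤ (state g (K + j)).N := by
    intro j
    induction j with
    | zero => simpa using htwo K le_rfl
    | succ j ih =>
      rw [← add_assoc, (hsquare (K + j) (by omega)).2, pow_succ, pow_mul]
      exact Nat.pow_le_pow_left ih 2
  -- `2 N ≤ N ^ 2 = N_{k+1} ≤ 2 g (k + 2)`
  have hN_le : ∀ k ≥ K, (state g k).N ≤ g (k + 2) := fun k hk => by
    have h2 := htwo k hk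
    have hhi := (state_bounds hmono hpos hsq (k + 1)).1.2
    rw [(hsquare k hk).2] at hhi
    nlinarith
  obtain ⟨k, hlt, hk⟩ :=
    ((hgrowth (2 ^ (K + 2)) (by positivity)).and (eventually_ge_atTop (K + 2))).exists
  obtain ⟨j, rfl⟩ := Nat.exists_eq_add_of_le hk
  have hle : 2 ^ 2 ^ j ≤ g (K + 2 + j) :=
    (hdouble j).trans ((hN_le (K + j) (by omega)).trans (le_of_eq (by ring_nf)))
  have := Nat.pow_le_pow_left hle (2 ^ (K + 2))
  rw [← pow_mul, ← pow_add, add_comm j] at this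
  omega

theorem exists_factor_seq (hmono : Monotone g) (hpos : 1 ≤ g 0) (hsq : ∀ k, g (k + 1) ≤ g k ^ 2)
    (hgrowth : ∀ m ≠ 0, ∀ᶠ k in atTop, g k ^ m < 2 ^ 2 ^ k) :
    ∃ c : ℕ → ℕ, c 0 = 1 ∧ (∀ k, 1 ≤ c k) ∧
      (∀ k, c (k + 1) ≤ g 0 * ∏ j ∈ range (k + 1), c j) ∧
      (∀ k, g k ≤ g 0 * ∏ j ∈ range (k + 1), c j ∧
        g 0 * ∏ j ∈ range (k + 1), c j ≤ 2 * g (k + 1)) ∧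
      {k | c k = 1}.Infinite := by
  refine ⟨fun k => (state g k).c, rfl, one_le_c_state hmono hpos hsq, fun k => ?_, fun k => ?_,
    infinite_setOf_c_state_eq_one hmono hpos hsq hgrowth⟩
  · rw [← N_state_eq_mul_prod]
    exact c_state_succ_le hmono hpos hsq k
  · rw [← N_state_eq_mul_prod]
    exact (state_bounds hmono hpos hsq k).1

end SquaringConstruction

theorem le_sq_of_submul {f : ℕ → ℕ} (hsub : ∀ m n : ℕ, 1 ≤ m → 1 ≤ n → f (m + n) ≤ f m * f n)
    (k : ℕ) : f (2 ^ (k + 1)) ≤ f (2 ^ k) ^ 2 := by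
  rw [pow_succ, mul_two, sq]
  exact hsub _ _ Nat.one_le_two_pow Nat.one_le_two_pow

/-- For `f : ℕ → ℕ` non-decreasing, submultiplicative and subexponential
(with values `≥ 1`), there is a sequence `(c_k)` of positive integers with `c₀ = 1`,
`c_{k+1} ≤ N_k` where `N_k = f(1)·c₀⋯c_k`, such that `f(2^k) ≤ N_k ≤ 2·f(2^{k+1})` for
all `k`, and `c_k = 1` infinitely often. -/
theorem stmt11 (f : ℕ → ℕ) (hmono : Monotone f) (hpos : ∀ n, 1 ≤ f n)
    (hsub : ∀ m n : ℕ, 1 ≤ m → 1 ≤ n → f (m + n) ≤ f m * f n)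
    (hsubexp : Tendsto (fun n : ℕ => (f n : ℝ) ^ ((1 : ℝ) / (n : ℝ))) atTop (nhds 1)) :
    ∃ c : ℕ → ℕ, c 0 = 1 ∧ (∀ k, 1 ≤ c k) ∧
      (∀ k, c (k + 1) ≤ f 1 * ∏ j ∈ Finset.range (k + 1), c j) ∧
      (∀ k, f (2 ^ k) ≤ f 1 * ∏ j ∈ Finset.range (k + 1), c j ∧
        f 1 * ∏ j ∈ Finset.range (k + 1), c j ≤ 2 * f (2 ^ (k + 1))) ∧
      {k : ℕ | c k = 1}.Infinite := by
  have hgrowth : ∀ m ≠ 0, ∀ᶠ k in atTop, f (2 ^ k) ^ m < 2 ^ 2 ^ k := fun m hm =>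
    (tendsto_pow_atTop_atTop_of_one_lt one_lt_two).eventually (eventually_pow_lt_two_pow hsubexp hm)
  simpa using SquaringConstruction.exists_factor_seq (g := fun k => f (2 ^ k))
    (hmono.comp (pow_right_monotone one_le_two)) (hpos _) (le_sq_of_submul hsub) hgrowth
end

section
/- Let Σ be a finite alphabet, u ∈ Σ^d with d ≥ 1, and for each n let W(n) ⊆ Σ^{2^n} be nonempty finite sets with W(n+1) ⊆ W(n)·W(n) (every word of W(n+1) is a concatenation of two words from W(n)). Let I_n = [a_n, b_n] be the convex hull in ℝ of {φ_u(w) : w ∈ W(n)}, where φ_u(w) = Φ_u(w)/2^n and Φ_u counts occurrences of u in w. Then I_{n+1} ⊆ I_n + [0, d/2^{n+1}] for every n. -/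
/-!
Split `w ∈ W (n+1)` as `w₀ ++ w₁` with `w₀, w₁ ∈ W n`. An occurrence of `u` in `w₀ ++ w₁`
starting in `w₁` is an occurrence in `w₁`; one starting in `w₀` is an occurrence in `w₀` unless
it starts among the last `d` positions of `w₀`. Hence
`Φ(w₀) + Φ(w₁) ≤ Φ(w₀ ++ w₁) ≤ Φ(w₀) + Φ(w₁) + d`, and after dividing by `2^(n+1)` the value
`φ(w)` lies between the mean of `φ(w₀), φ(w₁) ∈ I_n` and that mean plus `d / 2^(n+1)`.
-/

/-- `countOcc u v` is the number of occurrences of `u` as a contiguous factor of `v`. -/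
def countOcc {α : Type*} [DecidableEq α] (u v : List α) : ℕ :=
  ((List.range v.length).filter (fun i => (v.drop i).take u.length = u)).length

open Finset

section countOcc

variable {α : Type*}

lemma add_length_le_of_take_drop_eq {u v : List α} {i : ℕ} (hi : i ≤ v.length)
    (h : (v.drop i).take u.length = u) : i + u.length ≤ v.length := by
  have := congrArg List.length h
  simp only [List.length_take, List.length_drop] at this
  omega

lemma take_drop_append_of_add_le {v w : List α} {i k : ℕ} (h : i + k ≤ v.length) :
    ((v ++ w).drop i).take k = (v.drop i).take k := by
  rw [List.drop_append_of_le_length (by omega),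
    List.take_append_of_le_length (by rw [List.length_drop]; omega)]

variable [DecidableEq α]

lemma countOcc_eq_card (u v : List α) :
    countOcc u v = #{i ∈ range v.length | (v.drop i).take u.length = u} := rfl

lemma countOcc_append (u v w : List α) :
    countOcc u (v ++ w) =
      #{i ∈ range v.length | ((v ++ w).drop i).take u.length = u} + countOcc u w := by
  have hw : ∀ j, ((v ++ w).drop (v.length + j)).take u.length = (w.drop j).take u.length := by
    intro j
    rw [List.drop_append, List.drop_eq_nil_of_le (by omega), List.nil_append,
      Nat.add_sub_cancel_left]
  show List.length _ = List.length _ + List.length _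
  rw [List.length_append, List.range_add, List.filter_append, List.length_append, List.filter_map,
    List.length_map]
  congr 2
  exact List.filter_congr fun j _ => by simp only [Function.comp, hw]

lemma countOcc_add_countOcc_le_countOcc_append (u v w : List α) :
    countOcc u v + countOcc u w ≤ countOcc u (v ++ w) := by
  rw [countOcc_append, countOcc_eq_card u v]
  refine Nat.add_le_add_right (card_le_card (monotone_filter_right _ fun i hi hocc => ?_)) _
  rwa [take_drop_append_of_add_le (add_length_le_of_take_drop_eq (mem_range.1 hi).le hocc)]

lemma countOcc_append_le (u v w : List α) :
    countOcc u (v ++ w) ≤ countOcc u v + countOcc u w + u.length := by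
  rw [countOcc_append, countOcc_eq_card u v, add_right_comm]
  gcongr
  calc #{i ∈ range v.length | ((v ++ w).drop i).take u.length = u}
      ≤ #({i ∈ range v.length | (v.drop i).take u.length = u} ∪
          Ico (v.length - u.length) v.length) := by
        refine card_le_card fun i hi => ?_
        rw [mem_filter, mem_range] at hi
        rw [mem_union, mem_filter, mem_range, mem_Ico]
        by_cases hfit : i + u.length ≤ v.length
        · exact .inl ⟨hi.1, (take_drop_append_of_add_le hfit).symm.trans hi.2⟩
        · exact .inr ⟨by omega, hi.1⟩
    _ ≤ #{i ∈ range v.length | (v.drop i).take u.length = u} +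
          #(Ico (v.length - u.length) v.length) := card_union_le _ _
    _ ≤ _ := by rw [Nat.card_Ico]; omega

end countOcc

lemma min_le_div_pow_succ {a b c : ℕ} (h : a + b ≤ c) (n : ℕ) :
    min ((a : ℝ) / 2 ^ n) (b / 2 ^ n) ≤ c / 2 ^ (n + 1) := by
  calc min ((a : ℝ) / 2 ^ n) (b / 2 ^ n) ≤ (a / 2 ^ n + b / 2 ^ n) / 2 := by
        rcases min_cases ((a : ℝ) / 2 ^ n) (b / 2 ^ n) with ⟨h, _⟩ | ⟨h, _⟩ <;> rw [h] <;> linarith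
    _ = (a + b : ℕ) / 2 ^ (n + 1) := by push_cast; ring
    _ ≤ c / 2 ^ (n + 1) := by gcongr

lemma div_pow_succ_le_max {a b c d : ℕ} (h : c ≤ a + b + d) (n : ℕ) :
    (c : ℝ) / 2 ^ (n + 1) ≤ max ((a : ℝ) / 2 ^ n) (b / 2 ^ n) + d / 2 ^ (n + 1) := by
  calc (c : ℝ) / 2 ^ (n + 1) ≤ (a + b + d : ℕ) / 2 ^ (n + 1) := by gcongr
    _ = (a / 2 ^ n + b / 2 ^ n) / 2 + d / 2 ^ (n + 1) := by push_cast; ring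
    _ ≤ _ := by
        rcases max_cases ((a : ℝ) / 2 ^ n) (b / 2 ^ n) with ⟨h, _⟩ | ⟨h, _⟩ <;> rw [h] <;> linarith

theorem stmt13_general {A : Type*} [DecidableEq A] (u : List A) (d : ℕ)
    (hud : u.length = d)
    (W : ℕ → Finset (List A)) (hne : ∀ n, (W n).Nonempty)
    (hsplit : ∀ n, ∀ w ∈ W (n + 1), ∃ w₀ ∈ W n, ∃ w₁ ∈ W n, w = w₀ ++ w₁) (n : ℕ) :
    Set.Icc ((W (n + 1)).inf' (hne (n + 1)) (fun w => (countOcc u w : ℝ) / 2 ^ (n + 1)))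
        ((W (n + 1)).sup' (hne (n + 1)) (fun w => (countOcc u w : ℝ) / 2 ^ (n + 1))) ⊆
      Set.Icc ((W n).inf' (hne n) (fun w => (countOcc u w : ℝ) / 2 ^ n))
        ((W n).sup' (hne n) (fun w => (countOcc u w : ℝ) / 2 ^ n) + d / 2 ^ (n + 1)) := by
  set φ : List A → ℝ := fun w => (countOcc u w : ℝ) / 2 ^ n
  refine Set.Icc_subset_Icc (le_inf' _ _ fun w hw => ?_) (sup'_le _ _ fun w hw => ?_)
  · obtain ⟨w₀, hw₀, w₁, hw₁, rfl⟩ := hsplit n w hw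
    calc (W n).inf' (hne n) φ ≤ min (φ w₀) (φ w₁) := le_min (inf'_le φ hw₀) (inf'_le φ hw₁)
      _ ≤ _ := min_le_div_pow_succ (countOcc_add_countOcc_le_countOcc_append u w₀ w₁) n
  · obtain ⟨w₀, hw₀, w₁, hw₁, rfl⟩ := hsplit n w hw
    calc _ ≤ max (φ w₀) (φ w₁) + d / 2 ^ (n + 1) :=
          div_pow_succ_le_max (hud ▸ countOcc_append_le u w₀ w₁) n
      _ ≤ _ := by gcongr; exact max_le (le_sup' φ hw₀) (le_sup' φ hw₁)

/-- Let `u` have length `d ≥ 1` and let `W n` be nonempty sets of words of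
length `2^n` with `W (n+1) ⊆ W n · W n`. Writing `φ_u(w) = Φ_u(w)/2^n` for `w ∈ W n`
and `I_n = [a_n, b_n]` for the convex hull of `{φ_u(w) : w ∈ W n}`, we have
`I_{n+1} ⊆ I_n + [0, d/2^{n+1}]`. -/
theorem stmt13 {A : Type*} [Fintype A] [DecidableEq A] (u : List A) (d : ℕ)
    (hud : u.length = d) (hd : 1 ≤ d)
    (W : ℕ → Finset (List A)) (hne : ∀ n, (W n).Nonempty)
    (hlen : ∀ n, ∀ w ∈ W n, w.length = 2 ^ n)
    (hsplit : ∀ n, ∀ w ∈ W (n + 1), ∃ w₀ ∈ W n, ∃ w₁ ∈ W n, w = w₀ ++ w₁) (n : ℕ) :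
    Set.Icc ((W (n + 1)).inf' (hne (n + 1)) (fun w => (countOcc u w : ℝ) / 2 ^ (n + 1)))
        ((W (n + 1)).sup' (hne (n + 1)) (fun w => (countOcc u w : ℝ) / 2 ^ (n + 1))) ⊆
      Set.Icc ((W n).inf' (hne n) (fun w => (countOcc u w : ℝ) / 2 ^ n))
        ((W n).sup' (hne n) (fun w => (countOcc u w : ℝ) / 2 ^ n) + d / 2 ^ (n + 1)) :=
  stmt13_general u d hud W hne hsplit n
end

section
/- Let (Δ_n)_{n≥1} be a sequence of non-negative reals and S ⊆ ℕ an infinite set, and d > 0 a constant. Suppose Δ_{n+1} ≤ Δ_n + d/2^{n+1} for all n, and Δ_{n+1} ≤ Δ_n/2 + d/2^{n+1} for all n ∈ S. Then Δ_n → 0 as n → ∞. -/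
/-!
Adding the tail `t n = ∑_{k ≥ n} e k` of the (summable) error terms turns `Δ` into a
non-increasing sequence `v = Δ + t`, which therefore converges to some `L ≥ 0`. At the steps
`n ∈ S` it contracts, `v (n + 1) ≤ v n / 2 + t n / 2`, and since `S` is infinite this gives
`L ≤ L / 2` in the limit, so `L = 0`; finally `Δ = v - t → L`.
-/

open Filter Topology

theorem nonpos_of_tendsto_of_frequently_le_mul_add {v w : ℕ → ℝ} {L c : ℝ} (hc : c < 1)
    (hv : Tendsto v atTop (𝓝 L)) (hw : Tendsto w atTop (𝓝 0))
    (hvw : ∃ᶠ n in atTop, v (n + 1) ≤ c * v n + w n) : L ≤ 0 := by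
  by_contra! hL
  have hlim : Tendsto (fun n ↦ c * v n + w n) atTop (𝓝 (c * L)) := by
    simpa using (hv.const_mul c).add hw
  have hlt : ∀ᶠ n in atTop, c * v n + w n < v (n + 1) :=
    hlim.eventually_lt (hv.comp (tendsto_add_atTop_nat 1)) (by nlinarith)
  obtain ⟨n, hle, hgt⟩ := (hvw.and_eventually hlt).exists
  exact hle.not_gt hgt

theorem tsum_nat_add_eq_add_tsum_nat_add {α : Type*} [AddCommGroup α] [TopologicalSpace α]
    [IsTopologicalAddGroup α] [T2Space α] {e : ℕ → α} (he : Summable e) (n : ℕ) :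
    ∑' k, e (k + n) = e n + ∑' k, e (k + (n + 1)) := by
  rw [((summable_nat_add_iff n).mpr he).tsum_eq_zero_add, zero_add]
  simp only [add_assoc, add_comm 1 n]

theorem tendsto_zero_of_le_add_of_le_mul_add_on_infinite {u e : ℕ → ℝ} {S : Set ℕ} {c : ℝ}
    (hu : ∀ n, 0 ≤ u n) (he : Summable e) (hS : S.Infinite) (hc : c < 1)
    (h1 : ∀ n, u (n + 1) ≤ u n + e n) (h2 : ∀ n ∈ S, u (n + 1) ≤ c * u n + e n) :
    Tendsto u atTop (𝓝 0) := by
  set t : ℕ → ℝ := fun n ↦ ∑' k, e (k + n)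
  have ht : Tendsto t atTop (𝓝 0) := tendsto_sum_nat_add e
  have ht_succ (n : ℕ) : t n = e n + t (n + 1) := tsum_nat_add_eq_add_tsum_nat_add he n
  set v : ℕ → ℝ := fun n ↦ u n + t n
  have hv_anti : Antitone v := antitone_nat_of_succ_le fun n ↦ by
    simp only [v, ht_succ n]; linarith [h1 n]
  have hv_bdd : BddBelow (Set.range v) := by
    obtain ⟨m, hm⟩ := ht.bddBelow_range
    exact ⟨m, by rintro _ ⟨n, rfl⟩; linarith [hu n, hm ⟨n, rfl⟩]⟩
  set L := ⨅ n, v n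
  have hv : Tendsto v atTop (𝓝 L) := tendsto_atTop_ciInf hv_anti hv_bdd
  have hu_lim : Tendsto u atTop (𝓝 L) := by
    simpa [v] using hv.sub ht
  have hL_nonneg : 0 ≤ L := ge_of_tendsto' hu_lim hu
  have hL_nonpos : L ≤ 0 := by
    refine nonpos_of_tendsto_of_frequently_le_mul_add hc hv
      (w := fun n ↦ (1 - c) * t n) (by simpa using ht.const_mul (1 - c)) ?_
    refine (Nat.frequently_atTop_iff_infinite.mpr hS).mono fun n hn ↦ ?_
    simp only [v, ht_succ n]
    linarith [h2 n hn]
  rwa [le_antisymm hL_nonpos hL_nonneg] at hu_lim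

theorem stmt14_general (Δ : ℕ → ℝ) (hΔ : ∀ n, 0 ≤ Δ n) (S : Set ℕ) (hS : S.Infinite)
    (d : ℝ)
    (h1 : ∀ n, Δ (n + 1) ≤ Δ n + d / 2 ^ (n + 1))
    (h2 : ∀ n ∈ S, Δ (n + 1) ≤ Δ n / 2 + d / 2 ^ (n + 1)) :
    Tendsto Δ atTop (nhds 0) := by
  have he : Summable fun n : ℕ ↦ d / 2 ^ (n + 1) := by
    simpa only [pow_succ, div_div, mul_comm] using summable_geometric_two' d
  refine tendsto_zero_of_le_add_of_le_mul_add_on_infinite hΔ he hS (c := 1 / 2) (by norm_num) h1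
    fun n hn ↦ ?_
  simpa only [one_div_mul_eq_div] using h2 n hn

/-- A sequence of non-negative reals that increases by at most `d/2^{n+1}`
at each step and is halved (up to the same error) at each step in an infinite set `S`
converges to `0`. -/
theorem stmt14 (Δ : ℕ → ℝ) (hΔ : ∀ n, 0 ≤ Δ n) (S : Set ℕ) (hS : S.Infinite)
    (d : ℝ) (hd : 0 < d)
    (h1 : ∀ n, Δ (n + 1) ≤ Δ n + d / 2 ^ (n + 1))
    (h2 : ∀ n ∈ S, Δ (n + 1) ≤ Δ n / 2 + d / 2 ^ (n + 1)) :
    Tendsto Δ atTop (nhds 0) :=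
  stmt14_general Δ hΔ S hS d h1 h2
end
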